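/- Let 0 < β < 1, λ ∈ ℝ \ {0}, f₂ ∈ L²(ℝ), and set η(ξ) = |ξ|^{(2β-1)/2}. Then |∫_{-∞}^{∞} η(ξ) f₂(ξ)/(iλ + ξ²) dξ| ≤ C |λ|^{(β-2)/2} ‖f₂‖_{L²(ℝ)} for a constant C depending only on β. -/

import Mathlib

/-!
By Cauchy–Schwarz the integral is at most `‖f₂‖` times the `L²` norm of
`g(ξ) = η(ξ) / (iλ + ξ²)`, and `|g(ξ)|² = |ξ|^(2β-1) / (λ² + ξ⁴)`. The substitution
`ξ = |λ|^(1/2) u` turns `∫ |g|²` into `|λ|^(β-2)` times the fixed integral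
`∫ |u|^(2β-1) / (1 + u⁴)`, which is finite because `-1 < 2β - 1 < 3`.
-/

open MeasureTheory Real Set

namespace MeasureTheory

variable {α 𝕜 : Type*} [MeasurableSpace α] {μ : Measure α} [RCLike 𝕜]

theorem Lp.norm_eq_sqrt_integral_norm_sq {E : Type*} [NormedAddCommGroup E] (f : Lp E 2 μ) :
    ‖f‖ = √(∫ x, ‖f x‖ ^ 2 ∂μ) := by
  rw [Lp.norm_def, (Lp.memLp f).eLpNorm_eq_integral_rpow_norm two_ne_zero ENNReal.ofNat_ne_top,
    ENNReal.toReal_ofReal (by positivity), sqrt_eq_rpow]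
  norm_num

theorem norm_integral_mul_le_sqrt_integral_norm_sq_mul_norm {g : α → 𝕜} (hg : MemLp g 2 μ)
    (f : Lp 𝕜 2 μ) : ‖∫ x, g x * f x ∂μ‖ ≤ √(∫ x, ‖g x‖ ^ 2 ∂μ) * ‖f‖ := by
  have holder := integral_mul_norm_le_Lp_mul_Lq Real.HolderConjugate.two_two
    (by simpa using hg) (by simpa using Lp.memLp f)
  calc ‖∫ x, g x * f x ∂μ‖ ≤ ∫ x, ‖g x‖ * ‖f x‖ ∂μ := by
        simpa only [norm_mul] using norm_integral_le_integral_norm (fun x => g x * f x)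
    _ ≤ √(∫ x, ‖g x‖ ^ 2 ∂μ) * ‖f‖ := by
        simpa [Lp.norm_eq_sqrt_integral_norm_sq, sqrt_eq_rpow] using holder

end MeasureTheory

theorem integrable_comp_abs_of_integrableOn_Ioi {E : Type*} [NormedAddCommGroup E] {f : ℝ → E}
    (hf : IntegrableOn f (Ioi 0)) : Integrable (fun x => f |x|) := by
  have h_Ioi : IntegrableOn (fun x => f |x|) (Ioi 0) :=
    hf.congr_fun (fun x hx => by rw [abs_of_pos hx]) measurableSet_Ioi
  have h_Iic : IntegrableOn (fun x => f |x|) (Iic 0) := by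
    rw [← (Measure.measurePreserving_neg volume).integrableOn_comp_preimage
      (Homeomorph.neg ℝ).measurableEmbedding]
    simpa [Function.comp_def, integrableOn_Ici_iff_integrableOn_Ioi] using h_Ioi
  simpa using h_Iic.union h_Ioi

theorem integrableOn_Ioi_rpow_div_one_add_pow_four {s : ℝ} (hs0 : -1 < s) (hs3 : s < 3) :
    IntegrableOn (fun u : ℝ => u ^ s / (1 + u ^ 4)) (Ioi 0) := by
  have hmeas : AEStronglyMeasurable (fun u : ℝ => u ^ s / (1 + u ^ 4)) :=
    (by fun_prop : Measurable fun u : ℝ => u ^ s / (1 + u ^ 4)).aestronglyMeasurable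
  have near_zero : IntegrableOn (fun u : ℝ => u ^ s / (1 + u ^ 4)) (Ioc 0 1) := by
    refine Integrable.mono' (g := fun u => u ^ s) ?_ hmeas.restrict ?_
    · exact (intervalIntegral.intervalIntegrable_rpow' hs0).1
    filter_upwards [ae_restrict_mem measurableSet_Ioc] with u hu
    have hu0 := hu.1
    rw [norm_of_nonneg (by positivity)]
    exact div_le_self (by positivity) (le_add_of_nonneg_right (by positivity))
  have near_infty : IntegrableOn (fun u : ℝ => u ^ s / (1 + u ^ 4)) (Ioi 1) := by
    refine Integrable.mono' (integrableOn_Ioi_rpow_of_lt (by linarith : s - 4 < -1) one_pos)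
      hmeas.restrict ?_
    filter_upwards [ae_restrict_mem measurableSet_Ioi] with u (hu : 1 < u)
    have hu0 : 0 < u := one_pos.trans hu
    rw [norm_of_nonneg (by positivity), rpow_sub hu0, rpow_ofNat]
    gcongr
    linarith
  simpa using near_zero.union near_infty

theorem integrable_abs_rpow_div_one_add_pow_four {s : ℝ} (hs0 : -1 < s) (hs3 : s < 3) :
    Integrable (fun u : ℝ => |u| ^ s / (1 + u ^ 4)) := by
  simpa [Even.pow_abs ⟨2, rfl⟩] using integrable_comp_abs_of_integrableOn_Ioi
    (integrableOn_Ioi_rpow_div_one_add_pow_four hs0 hs3)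

theorem integral_abs_rpow_div_one_add_pow_four_pos {s : ℝ} (hs0 : -1 < s) (hs3 : s < 3) :
    0 < ∫ u : ℝ, |u| ^ s / (1 + u ^ 4) := by
  rw [integral_pos_iff_support_of_nonneg (fun u => by positivity)
    (integrable_abs_rpow_div_one_add_pow_four hs0 hs3)]
  have h_Ioi : Ioi 0 ⊆ Function.support fun u : ℝ => |u| ^ s / (1 + u ^ 4) :=
    fun u (hu : 0 < u) => (by positivity : |u| ^ s / (1 + u ^ 4) ≠ 0)
  exact (measure_mono h_Ioi).trans_lt' (by simp)

theorem abs_mul_rpow_div_pow_four_add_mul_pow_four (s : ℝ) {c : ℝ} (hc : 0 < c) (u : ℝ) :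
    |c * u| ^ s / (c ^ 4 + (c * u) ^ 4) = c ^ (s - 4) * (|u| ^ s / (1 + u ^ 4)) := by
  rw [abs_mul, abs_of_pos hc, mul_rpow hc.le (abs_nonneg u), rpow_sub hc, rpow_ofNat]
  field_simp

theorem integrable_abs_rpow_div_pow_four_add_pow_four {s : ℝ} (hs0 : -1 < s) (hs3 : s < 3)
    {c : ℝ} (hc : 0 < c) : Integrable (fun ξ : ℝ => |ξ| ^ s / (c ^ 4 + ξ ^ 4)) := by
  rw [← integrable_comp_mul_left_iff _ hc.ne']
  simp_rw [abs_mul_rpow_div_pow_four_add_mul_pow_four s hc]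
  exact (integrable_abs_rpow_div_one_add_pow_four hs0 hs3).const_mul _

theorem integral_abs_rpow_div_pow_four_add_pow_four (s : ℝ) {c : ℝ} (hc : 0 < c) :
    ∫ ξ : ℝ, |ξ| ^ s / (c ^ 4 + ξ ^ 4) = c ^ (s - 3) * ∫ u : ℝ, |u| ^ s / (1 + u ^ 4) := by
  have h := Measure.integral_comp_mul_left (fun ξ : ℝ => |ξ| ^ s / (c ^ 4 + ξ ^ 4)) c
  simp_rw [abs_mul_rpow_div_pow_four_add_mul_pow_four s hc, integral_const_mul, smul_eq_mul,
    abs_inv, abs_of_pos hc] at h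
  rw [eq_inv_mul_iff_mul_eq₀ hc.ne'] at h
  rw [← h, show s - 3 = s - 4 + 1 by ring, rpow_add_one hc.ne']
  ring

theorem norm_sq_ofReal_abs_rpow_div_I_mul_add_sq (s l ξ : ℝ) :
    ‖((|ξ| ^ (s / 2) : ℝ) : ℂ) / (Complex.I * l + (ξ : ℂ) ^ 2)‖ ^ 2 = |ξ| ^ s / (l ^ 2 + ξ ^ 4) := by
  rw [norm_div, div_pow, Complex.norm_real, norm_of_nonneg (by positivity), ← rpow_natCast,
    ← rpow_mul (abs_nonneg ξ)]
  congr 1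
  · norm_num
  · rw [Complex.sq_norm, Complex.normSq_apply]
    simp only [← Complex.ofReal_pow, Complex.add_re, Complex.mul_re, Complex.I_re,
      Complex.ofReal_re, zero_mul, Complex.I_im, Complex.ofReal_im, mul_zero, sub_self, zero_add,
      Complex.add_im, Complex.mul_im, one_mul, add_zero]
    ring

/-- For `0 < β < 1` there is `C > 0` (depending only on `β`) such that for all real `l ≠ 0`
and all `f₂ ∈ L²(ℝ)`, with `η(ξ) = |ξ|^((2β-1)/2)`,
`|∫ η(ξ) f₂(ξ)/(i l + ξ²) dξ| ≤ C |l|^((β-2)/2) ‖f₂‖_{L²}`. -/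
theorem stmt4 (β : ℝ) (hβ0 : 0 < β) (hβ1 : β < 1) :
    ∃ C > 0, ∀ (l : ℝ), l ≠ 0 →
      ∀ f₂ : MeasureTheory.Lp ℂ 2 (volume : MeasureTheory.Measure ℝ),
        ‖∫ ξ : ℝ, ((|ξ| ^ ((2 * β - 1) / 2) : ℝ) : ℂ) * f₂ ξ / (Complex.I * l + (ξ : ℂ) ^ 2)‖
          ≤ C * |l| ^ ((β - 2) / 2) * ‖f₂‖ := by
  set s := 2 * β - 1 with hs
  have hs0 : -1 < s := by linarith
  have hs3 : s < 3 := by linarith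
  set K := ∫ u : ℝ, |u| ^ s / (1 + u ^ 4)
  refine ⟨√K, sqrt_pos.2 (integral_abs_rpow_div_one_add_pow_four_pos hs0 hs3), fun l hl f₂ => ?_⟩
  set c := √|l| with hc_def
  have hc : 0 < c := sqrt_pos.2 (abs_pos.2 hl)
  have hc4 : c ^ 4 = l ^ 2 := by
    rw [show 4 = 2 * 2 by rfl, pow_mul, sq_sqrt (abs_nonneg l), sq_abs]
  have hscale : c ^ (s - 3) = (|l| ^ ((β - 2) / 2)) ^ 2 := by
    rw [hc_def, hs, sqrt_eq_rpow, ← rpow_mul (abs_nonneg l), ← rpow_natCast,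
      ← rpow_mul (abs_nonneg l)]
    congr 1
    push_cast
    ring
  set g : ℝ → ℂ := fun ξ => ((|ξ| ^ (s / 2) : ℝ) : ℂ) / (Complex.I * l + (ξ : ℂ) ^ 2)
  have hg_sq : ∀ ξ, ‖g ξ‖ ^ 2 = |ξ| ^ s / (c ^ 4 + ξ ^ 4) := fun ξ => by
    rw [hc4]; exact norm_sq_ofReal_abs_rpow_div_I_mul_add_sq s l ξ
  have hg : MemLp g 2 := by
    refine (memLp_two_iff_integrable_sq_norm (by fun_prop)).2 ?_
    simpa only [hg_sq] using integrable_abs_rpow_div_pow_four_add_pow_four hs0 hs3 hc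
  calc ‖∫ ξ : ℝ, ((|ξ| ^ (s / 2) : ℝ) : ℂ) * f₂ ξ / (Complex.I * l + (ξ : ℂ) ^ 2)‖
      = ‖∫ ξ : ℝ, g ξ * f₂ ξ‖ := by simp only [g, div_mul_eq_mul_div]
    _ ≤ √(∫ ξ : ℝ, ‖g ξ‖ ^ 2) * ‖f₂‖ := norm_integral_mul_le_sqrt_integral_norm_sq_mul_norm hg f₂
    _ = √K * |l| ^ ((β - 2) / 2) * ‖f₂‖ := by
      rw [integral_congr_ae (ae_of_all _ hg_sq), integral_abs_rpow_div_pow_four_add_pow_four s hc,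
        hscale, sqrt_mul (sq_nonneg _), sqrt_sq (by positivity), mul_comm (|l| ^ _)]
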